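/- Let ≤_T be the lexicographic order with X₁ > X₂. Let 2 ≤ t ≤ 4 with t ≤ ⌊r₁/2⌋ and t ≤ ⌊r₂/2⌋, let e ∈ 𝔽(r₁,r₂) with ω(e) ≤ t, let τ ∈ 𝓘, and let U be the syndrome table afforded by τ and e. Let l = (l₁,l₂) ∈ 𝔉 with l₂ ≠ 0 and l₁ = 1. Let F = {f^(1), f^(2)} be a minimal set of polynomials for u^l with defining points s^(1), s^(2) satisfying s^(1)_1 = 1 and s^(2)_2 = t, and let (g, k₁) be an auxiliary polynomial for index 1 with v₁ = g[U]_{k₁} ≠ 0. Then there exists b ∈ L such that the polynomial h_b = f^(1) − (b/v₁)·g generates u^l and satisfies h_b[U]_k = 0 for every k ∈ B(2t+1) with l ≤_T k. -/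

import Mathlib

/-!
The auxiliary polynomial `g` has its leading exponent in row `0`, so `h_b = f⁽¹⁾ - (b/v₁)·g`
keeps the leading exponent `s⁽¹⁾ = (1,0)`, and the choice `b = f⁽¹⁾[U]_l` makes `h_b[U]` vanish
on the whole column `(1,0), …, (1,t-1) = l`.

Minimality of `F` rules out the row polynomial `∏ (X₂ - α₂^y)`, `y` ranging over the second
coordinates of the error positions, since it generates `U`; hence the at most `t` error positions
have `t` distinct second coordinates. Now `h_b[U]_(1,j) = ∑ₚ cₚ (α₂^p₂)^j` with `cₚ` a nonzero
multiple of `h_b(α^p)`, so this Vandermonde system forces `h_b(α^p) = 0` at every error position,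
and therefore `h_b[U]` vanishes identically.
-/

/-- A monomial order on ℕ × ℕ: a linear order compatible with addition
for which (0,0) is the least element. -/
structure MonOrd where
  le : ℕ × ℕ → ℕ × ℕ → Prop
  refl : ∀ a, le a a
  trans : ∀ a b c, le a b → le b c → le a c
  antisymm : ∀ a b, le a b → le b a → a = b
  total : ∀ a b, le a b ∨ le b a
  add_right : ∀ a b c, le a b → le (a + c) (b + c)
  zero_le : ∀ a, le (0, 0) a

/-- Strict version of a monomial order. -/
def MonOrd.lt (T : MonOrd) (a b : ℕ × ℕ) : Prop := T.le a b ∧ a ≠ b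

/-- `s` is the leading power product exponent of `f` w.r.t. `T`. -/
def IsLP {L : Type} [Field L] (T : MonOrd) (f : (ℕ × ℕ) →₀ L) (s : ℕ × ℕ) : Prop :=
  s ∈ f.support ∧ ∀ m ∈ f.support, T.le m s

/-- `f[U]_n`, computed with respect to a given leading exponent `s` of `f`. -/
noncomputable def fApp {L : Type} [Field L] (U : ℕ × ℕ → L) (f : (ℕ × ℕ) →₀ L)
    (s n : ℕ × ℕ) : L :=
  if s.1 ≤ n.1 ∧ s.2 ≤ n.2 then
    ∑ m ∈ f.support, f m * U (m.1 + n.1 - s.1, m.2 + n.2 - s.2)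
  else 0

/-- `f` generates the doubly periodic array `U`. -/
def GeneratesU {L : Type} [Field L] (T : MonOrd) (U : ℕ × ℕ → L) (f : (ℕ × ℕ) →₀ L) : Prop :=
  ∃ s, IsLP T f s ∧ ∀ n, fApp U f s n = 0

/-- `f` generates the finite subarray `u^l` of `U`. -/
def GeneratesUpTo {L : Type} [Field L] (T : MonOrd) (U : ℕ × ℕ → L) (l : ℕ × ℕ)
    (f : (ℕ × ℕ) →₀ L) : Prop :=
  ∃ s, IsLP T f s ∧ ∀ k, s.1 ≤ k.1 → s.2 ≤ k.2 → T.lt k l → fApp U f s k = 0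

/-- `U` is a doubly periodic array of period r₁ × r₂. -/
def DoublyPeriodic {L : Type} (r₁ r₂ : ℕ) (U : ℕ × ℕ → L) : Prop :=
  ∀ n m : ℕ × ℕ, n.1 % r₁ = m.1 % r₁ → n.2 % r₂ = m.2 % r₂ → U n = U m

/-- Evaluation of a bivariate polynomial at a point `(x, y)`. -/
noncomputable def polyEval {L : Type} [Field L] (f : (ℕ × ℕ) →₀ L) (x y : L) : L :=
  ∑ m ∈ f.support, f m * x ^ m.1 * y ^ m.2

/-- The syndrome table afforded by `τ` and `e`:  `u_n = e(α^(τ+n))`. -/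
noncomputable def synTable {F L : Type} [Field F] [Field L] [Algebra F L] {r₁ r₂ : ℕ}
    (α₁ α₂ : L) (τ : Fin r₁ × Fin r₂) (e : Fin r₁ × Fin r₂ → F) : ℕ × ℕ → L :=
  fun n => ∑ p : Fin r₁ × Fin r₂,
    algebraMap F L (e p) * (α₁ ^ ((τ.1 : ℕ) + n.1)) ^ (p.1 : ℕ)
      * (α₂ ^ ((τ.2 : ℕ) + n.2)) ^ (p.2 : ℕ)

/-- The weight ω(e): number of nonzero coefficients. -/
noncomputable def wt {F : Type} [Field F] {r₁ r₂ : ℕ} (e : Fin r₁ × Fin r₂ → F) : ℕ :=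
  {p | e p ≠ 0}.ncard

/-- The hyperbolic set B(δ) of amplitude δ inside {0,…,r₁−1} × {0,…,r₂−1}. -/
def hypB (r₁ r₂ δ : ℕ) : Set (ℕ × ℕ) :=
  {l | l.1 < r₁ ∧ l.2 < r₂ ∧ (l.1 + 1) * (l.2 + 1) ≤ δ ∧ l ≠ (δ - 1, 0) ∧ l ≠ (0, δ - 1)}

/-- The border set 𝔉 = {l ∈ B(2t+1) : 2t ≤ (l₁+1)(l₂+1)}. -/
def frontF (r₁ r₂ t : ℕ) : Set (ℕ × ℕ) :=
  {l ∈ hypB r₁ r₂ (2 * t + 1) | 2 * t ≤ (l.1 + 1) * (l.2 + 1)}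

/-- The lexicographic order with X₁ > X₂. -/
def lexMonOrd : MonOrd where
  le a b := a.1 < b.1 ∨ (a.1 = b.1 ∧ a.2 ≤ b.2)
  refl a := by omega
  trans a b c h1 h2 := by omega
  antisymm a b h1 h2 := by
    obtain ⟨a1, a2⟩ := a; obtain ⟨b1, b2⟩ := b
    simp_all only [Prod.mk.injEq]; omega
  total a b := by omega
  add_right a b c h := by
    obtain ⟨a1, a2⟩ := a; obtain ⟨b1, b2⟩ := b; obtain ⟨c1, c2⟩ := c
    simp_all only [Prod.mk_add_mk]; omega
  zero_le a := by
    obtain ⟨a1, a2⟩ := a; simp only []; omega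

/-- The (reverse) graded order with X₂ > X₁. -/
def grMonOrd : MonOrd where
  le a b := a.1 + a.2 < b.1 + b.2 ∨ (a.1 + a.2 = b.1 + b.2 ∧ a.2 ≤ b.2)
  refl a := by omega
  trans a b c h1 h2 := by omega
  antisymm a b h1 h2 := by
    obtain ⟨a1, a2⟩ := a; obtain ⟨b1, b2⟩ := b
    simp_all only [Prod.mk.injEq]; omega
  total a b := by omega
  add_right a b c h := by
    obtain ⟨a1, a2⟩ := a; obtain ⟨b1, b2⟩ := b; obtain ⟨c1, c2⟩ := c
    simp_all only [Prod.mk_add_mk]; omega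
  zero_le a := by
    obtain ⟨a1, a2⟩ := a; simp only []; omega

/-- The ideal (X₁^{r₁} − 1, X₂^{r₂} − 1) of L[X₁,X₂]. -/
noncomputable def periodIdeal (L : Type) [Field L] (r₁ r₂ : ℕ) :
    Ideal (AddMonoidAlgebra L (ℕ × ℕ)) :=
  Ideal.span {AddMonoidAlgebra.single (r₁, 0) 1 - 1, AddMonoidAlgebra.single (0, r₂) 1 - 1}

open Finset Polynomial

theorem Finset.eq_zero_of_forall_sum_mul_pow_eq_zero {R ι : Type*} [CommRing R] [IsDomain R]
    (S : Finset ι) {x c : ι → R} (hx : Set.InjOn x S)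
    (h : ∀ j < #S, ∑ p ∈ S, c p * x p ^ j = 0) : ∀ p ∈ S, c p = 0 := by
  set φ : Fin #S ≃ S := S.equivFin.symm
  have hφ : Function.Injective fun i => x (φ i) := fun i i' hii' =>
    φ.injective (Subtype.ext (hx (φ i).2 (φ i').2 hii'))
  have hc := Matrix.eq_zero_of_forall_pow_sum_mul_pow_eq_zero hφ (v := fun i => c (φ i))
    fun i => by
      rw [← h i i.isLt, ← S.sum_coe_sort]
      exact φ.sum_comp fun p => c p * x p ^ (i : ℕ)
  intro p hp
  simpa using congrFun hc (φ.symm ⟨p, hp⟩)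

theorem lexMonOrd_le_iff {a b : ℕ × ℕ} :
    lexMonOrd.le a b ↔ a.1 < b.1 ∨ a.1 = b.1 ∧ a.2 ≤ b.2 := Iff.rfl

theorem lexMonOrd_lt_iff {a b : ℕ × ℕ} :
    lexMonOrd.lt a b ↔ a.1 < b.1 ∨ a.1 = b.1 ∧ a.2 < b.2 := by
  rw [MonOrd.lt, lexMonOrd_le_iff, Ne, Prod.ext_iff]
  omega

section Leading

variable {L : Type} [Field L]

theorem IsLP.sub_smul {T : MonOrd} {f g : (ℕ × ℕ) →₀ L} {s : ℕ × ℕ} (hf : IsLP T f s)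
    (hg : ∀ m ∈ g.support, T.lt m s) (c : L) : IsLP T (f - c • g) s := by
  have hgs : g s = 0 := Finsupp.notMem_support_iff.mp fun hs => (hg s hs).2 rfl
  refine ⟨?_, fun m hm => ?_⟩
  · simpa [hgs] using hf.1
  · rcases mem_union.mp (Finsupp.support_sub hm) with hm | hm
    · exact hf.2 m hm
    · exact (hg m (Finsupp.support_smul hm)).1

noncomputable def rowPoly (P : L[X]) : (ℕ × ℕ) →₀ L :=
  P.toFinsupp.coeff.embDomain (Function.Embedding.sectR 0 ℕ)

theorem rowPoly_support (P : L[X]) :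
    (rowPoly P).support = P.support.map (Function.Embedding.sectR 0 ℕ) := by
  rw [rowPoly, Finsupp.support_embDomain, support_toFinsupp]

theorem isLP_rowPoly (T : MonOrd) {P : L[X]} (hP : P ≠ 0) :
    IsLP T (rowPoly P) (0, P.natDegree) := by
  rw [IsLP, rowPoly_support]
  refine ⟨mem_map_of_mem _ (natDegree_mem_support_of_nonzero hP), fun m hm => ?_⟩
  obtain ⟨j, hj, rfl⟩ := mem_map.mp hm
  have h := T.add_right (0, 0) (0, P.natDegree - j) (0, j) (T.zero_le _)
  simp only [Prod.mk_add_mk, zero_add, Nat.sub_add_cancel (le_natDegree_of_mem_supp j hj)] at h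
  exact h

theorem polyEval_rowPoly (P : L[X]) (x y : L) : polyEval (rowPoly P) x y = P.eval y := by
  rw [polyEval, rowPoly_support, sum_map, eval_eq_sum, Polynomial.sum_def]
  refine sum_congr rfl fun j _ => ?_
  simp only [rowPoly, Finsupp.embDomain_apply, toFinsupp_apply]
  simp

end Leading

section Application

variable {L : Type} [Field L] {U : ℕ × ℕ → L} {f g : (ℕ × ℕ) →₀ L}

theorem fApp_of_le {s n : ℕ × ℕ} (h : s ≤ n) :
    fApp U f s n = ∑ m ∈ f.support, f m * U (m + (n - s)) := by
  obtain ⟨h₁, h₂⟩ := Prod.le_def.mp h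
  rw [fApp, if_pos ⟨h₁, h₂⟩]
  refine sum_congr rfl fun m _ => ?_
  congr 2
  exact Prod.ext (by simp; omega) (by simp; omega)

theorem fApp_of_not_le {s n : ℕ × ℕ} (h : ¬s ≤ n) : fApp U f s n = 0 := by
  rw [fApp, if_neg (mt Prod.le_def.mpr h)]

theorem fApp_self_add (s d : ℕ × ℕ) : fApp U f s (s + d) = ∑ m ∈ f.support, f m * U (m + d) := by
  rw [fApp_of_le le_self_add, add_tsub_cancel_left]

theorem fApp_sub_smul (c : L) (s n : ℕ × ℕ) :
    fApp U (f - c • g) s n = fApp U f s n - c * fApp U g s n := by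
  by_cases h : s ≤ n
  · simp only [fApp_of_le h]
    set W : ℕ × ℕ → L → L := fun m a => a * U (m + (n - s))
    change (f - c • g).sum W = f.sum W - c * g.sum W
    rw [Finsupp.sum_sub_index (fun _ _ _ => sub_mul _ _ _),
      Finsupp.sum_smul_index (fun _ => zero_mul _), Finsupp.mul_sum]
    simp only [W, mul_assoc]
  · simp [fApp_of_not_le h]

theorem fApp_sub_smul_column {sf sg : ℕ × ℕ} {N : ℕ} {v : L}
    (hf : ∀ j < N, fApp U f sf (sf + (0, j)) = 0) (hg : ∀ j < N, fApp U g sg (sg + (0, j)) = 0)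
    (hv : fApp U g sg (sg + (0, N)) = v) (hv0 : v ≠ 0) :
    ∀ j ≤ N, fApp U (f - (fApp U f sf (sf + (0, N)) / v) • g) sf (sf + (0, j)) = 0 := by
  intro j hj
  rw [fApp_sub_smul, fApp_self_add sf (f := g), ← fApp_self_add sg (f := g)]
  rcases hj.lt_or_eq with hj | rfl
  · rw [hf j hj, hg j hj, mul_zero, sub_zero]
  · rw [hv, div_mul_cancel₀ _ hv0, sub_self]

end Application

section Syndrome

variable {F L : Type} [Field F] [Field L] [Algebra F L] {r₁ r₂ : ℕ}
  (α₁ α₂ : L) (τ : Fin r₁ × Fin r₂) (e : Fin r₁ × Fin r₂ → F)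

noncomputable def errorPositions : Finset (Fin r₁ × Fin r₂) :=
  (Set.toFinite (Function.support e)).toFinset

theorem mem_errorPositions {p : Fin r₁ × Fin r₂} : p ∈ errorPositions e ↔ e p ≠ 0 := by
  simp [errorPositions]

theorem wt_eq_card_errorPositions : wt e = #(errorPositions e) :=
  Set.ncard_eq_toFinset_card _ _

theorem fApp_synTable {f : (ℕ × ℕ) →₀ L} {s n : ℕ × ℕ} (h : s ≤ n) :
    fApp (synTable α₁ α₂ τ e) f s n = ∑ p ∈ errorPositions e,
      algebraMap F L (e p) * (α₁ ^ (p.1 : ℕ)) ^ ((τ.1 : ℕ) + (n - s).1)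
        * (α₂ ^ (p.2 : ℕ)) ^ ((τ.2 : ℕ) + (n - s).2)
        * polyEval f (α₁ ^ (p.1 : ℕ)) (α₂ ^ (p.2 : ℕ)) := by
  rw [fApp_of_le h, sum_subset (subset_univ (errorPositions e)) fun p _ hp => by
    simp [not_not.mp ((mem_errorPositions e).not.mp hp)]]
  simp only [synTable, mul_sum, polyEval, Prod.fst_add, Prod.snd_add]
  rw [sum_comm]
  refine sum_congr rfl fun p _ => sum_congr rfl fun m _ => ?_
  ring

theorem fApp_synTable_eq_zero_of_polyEval {f : (ℕ × ℕ) →₀ L}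
    (hf : ∀ p ∈ errorPositions e, polyEval f (α₁ ^ (p.1 : ℕ)) (α₂ ^ (p.2 : ℕ)) = 0)
    (s n : ℕ × ℕ) : fApp (synTable α₁ α₂ τ e) f s n = 0 := by
  by_cases h : s ≤ n
  · rw [fApp_synTable α₁ α₂ τ e h]
    exact sum_eq_zero fun p hp => by rw [hf p hp, mul_zero]
  · exact fApp_of_not_le h

theorem exists_rowPoly_generator (T : MonOrd) :
    ∃ f, IsLP T f (0, #((errorPositions e).image Prod.snd)) ∧
      ∀ n, fApp (synTable α₁ α₂ τ e) f (0, #((errorPositions e).image Prod.snd)) n = 0 := by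
  set P : L[X] := ∏ y ∈ (errorPositions e).image Prod.snd, (X - C (α₂ ^ (y : ℕ)))
  have hP : P.natDegree = #((errorPositions e).image Prod.snd) :=
    natDegree_finsetProd_X_sub_C_eq_card _ _
  refine ⟨rowPoly P, hP ▸ isLP_rowPoly T (monic_prod_of_monic _ _ fun y _ =>
    monic_X_sub_C _).ne_zero, fApp_synTable_eq_zero_of_polyEval α₁ α₂ τ e (fun p hp => ?_) _⟩
  rw [polyEval_rowPoly, eval_prod]
  exact prod_eq_zero (mem_image_of_mem _ hp) (by simp)

theorem injOn_snd_errorPositions (T : MonOrd) {t : ℕ} (hcard : #(errorPositions e) ≤ t)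
    (hrow : ∀ f d, d < t → IsLP T f (0, d) → ∃ n, fApp (synTable α₁ α₂ τ e) f (0, d) n ≠ 0) :
    Set.InjOn Prod.snd (errorPositions e : Set (Fin r₁ × Fin r₂)) := by
  refine injOn_of_card_image_eq (le_antisymm card_image_le (hcard.trans ?_))
  by_contra! hlt
  obtain ⟨f, hf, hf0⟩ := exists_rowPoly_generator α₁ α₂ τ e T
  obtain ⟨n, hn⟩ := hrow f _ hlt hf
  exact hn (hf0 n)

theorem fApp_synTable_eq_zero_of_column (hα₁ : IsPrimitiveRoot α₁ r₁)
    (hα₂ : IsPrimitiveRoot α₂ r₂) {t : ℕ} (hcard : #(errorPositions e) ≤ t)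
    (hinj : Set.InjOn Prod.snd (errorPositions e : Set (Fin r₁ × Fin r₂)))
    {f : (ℕ × ℕ) →₀ L} {s : ℕ × ℕ}
    (hcol : ∀ j < t, fApp (synTable α₁ α₂ τ e) f s (s + (0, j)) = 0) (n : ℕ × ℕ) :
    fApp (synTable α₁ α₂ τ e) f s n = 0 := by
  refine fApp_synTable_eq_zero_of_polyEval α₁ α₂ τ e (fun p hp => ?_) s n
  have hy : Set.InjOn (fun p : Fin r₁ × Fin r₂ => α₂ ^ (p.2 : ℕ)) (errorPositions e) :=
    fun p hp p' hp' h => hinj hp hp' (Fin.ext (hα₂.pow_inj p.2.isLt p'.2.isLt h))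
  have hc := (errorPositions e).eq_zero_of_forall_sum_mul_pow_eq_zero hy
    (c := fun p => algebraMap F L (e p) * (α₁ ^ (p.1 : ℕ)) ^ (τ.1 : ℕ)
      * (α₂ ^ (p.2 : ℕ)) ^ (τ.2 : ℕ) * polyEval f (α₁ ^ (p.1 : ℕ)) (α₂ ^ (p.2 : ℕ)))
    (fun j hj => by
      rw [← hcol j (hj.trans_le hcard), fApp_synTable α₁ α₂ τ e le_self_add,
        add_tsub_cancel_left]
      refine sum_congr rfl fun p _ => ?_
      simp only [add_zero, pow_add]
      ring) p hp
  have he : algebraMap F L (e p) ≠ 0 := by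
    simpa using (mem_errorPositions e).mp hp
  simpa [he, hα₁.ne_zero p.1.pos.ne', hα₂.ne_zero p.2.pos.ne'] using hc

end Syndrome

theorem exceptional_case_lex_general
    (F : Type) [Field F]
    (L : Type) [Field L] [Algebra F L]
    (r₁ r₂ : ℕ)
    (α₁ α₂ : L) (hα₁ : IsPrimitiveRoot α₁ r₁) (hα₂ : IsPrimitiveRoot α₂ r₂)
    (t : ℕ)
    (e : Fin r₁ × Fin r₂ → F) (hω : wt e ≤ t) (τ : Fin r₁ × Fin r₂)
    (U : ℕ × ℕ → L) (hU : U = synTable α₁ α₂ τ e)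
    (l : ℕ × ℕ) (hl : l ∈ frontF r₁ r₂ t) (hl1 : l.1 = 1)
    (f₁ : (ℕ × ℕ) →₀ L) (s₁ s₂ : ℕ × ℕ)
    (hLP1 : IsLP lexMonOrd f₁ s₁)
    (hstair2 : s₁.2 = 0)
    (hs1 : s₁.1 = 1) (hs2 : s₂.2 = t)
    (hgen1 : ∀ k : ℕ × ℕ, s₁.1 ≤ k.1 → s₁.2 ≤ k.2 → lexMonOrd.lt k l → fApp U f₁ s₁ k = 0)
    (hmin : ∀ (g : (ℕ × ℕ) →₀ L) (sg : ℕ × ℕ), IsLP lexMonOrd g sg →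
      sg.1 ≤ s₁.1 - 1 → sg.2 ≤ s₂.2 - 1 →
      ∃ k : ℕ × ℕ, sg.1 ≤ k.1 ∧ sg.2 ≤ k.2 ∧ lexMonOrd.lt k l ∧ fApp U g sg k ≠ 0)
    (g : (ℕ × ℕ) →₀ L) (sg k₁ : ℕ × ℕ) (hgLP : IsLP lexMonOrd g sg)
    (hk₁l : lexMonOrd.lt k₁ l)
    (hgpast : ∀ m : ℕ × ℕ, sg.1 ≤ m.1 → sg.2 ≤ m.2 → lexMonOrd.lt m k₁ → fApp U g sg m = 0)
    (hk₁LP : (k₁.1 - sg.1, k₁.2 - sg.2) = (s₁.1 - 1, s₂.2 - 1))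
    (v₁ : L) (hv₁ : fApp U g sg k₁ = v₁) (hv₁0 : v₁ ≠ 0) :
    ∃ b : L, ∃ sh : ℕ × ℕ,
      IsLP lexMonOrd (f₁ - (b / v₁) • g) sh ∧
      (∀ k : ℕ × ℕ, sh.1 ≤ k.1 → sh.2 ≤ k.2 → lexMonOrd.lt k l →
        fApp U (f₁ - (b / v₁) • g) sh k = 0) ∧
      (∀ k ∈ hypB r₁ r₂ (2 * t + 1), lexMonOrd.le l k →
        fApp U (f₁ - (b / v₁) • g) sh k = 0) := by
  subst hU
  obtain ⟨⟨-, -, hlB, -, -⟩, hlF⟩ := hl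
  rw [hl1, one_add_one_eq_two] at hlB hlF
  rw [Prod.mk.injEq] at hk₁LP
  rw [lexMonOrd_lt_iff] at hk₁l
  have hsg_le : sg.1 ≤ k₁.1 ∧ sg.2 ≤ k₁.2 :=
    Prod.le_def.mp (not_not.mp fun h => hv₁0 (hv₁ ▸ fApp_of_not_le h))
  have hl_eq : l = s₁ + (0, t - 1) := Prod.ext (by simp; omega) (by simp; omega)
  have hsg : sg.1 = 0 := by omega
  have hk₁_eq : k₁ = sg + (0, t - 1) := Prod.ext (by simp; omega) (by simp; omega)
  have hcard : #(errorPositions e) ≤ t := wt_eq_card_errorPositions e ▸ hω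
  have hinj := injOn_snd_errorPositions α₁ α₂ τ e lexMonOrd hcard fun f d hd hf => by
    obtain ⟨k, -, -, -, hk⟩ := hmin f _ hf (by simp) (by simp; omega)
    exact ⟨k, hk⟩
  have hcol := fApp_sub_smul_column (N := t - 1) (f := f₁) (g := g) (sf := s₁) (sg := sg)
    (fun j hj => hgen1 _ (by simp) (by simp) (by rw [hl_eq, lexMonOrd_lt_iff]; simp; omega))
    (fun j hj => hgpast _ (by simp) (by simp) (by rw [hk₁_eq, lexMonOrd_lt_iff]; simp; omega))
    (hk₁_eq ▸ hv₁) hv₁0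
  rw [← hl_eq] at hcol
  have hzero := fApp_synTable_eq_zero_of_column α₁ α₂ τ e hα₁ hα₂ hcard hinj
    fun j hj => hcol j (by omega)
  have hg_row : ∀ m ∈ g.support, lexMonOrd.lt m s₁ := fun m hm =>
    lexMonOrd_lt_iff.mpr (by have := lexMonOrd_le_iff.mp (hgLP.2 m hm); omega)
  exact ⟨fApp (synTable α₁ α₂ τ e) f₁ s₁ l, s₁, hLP1.sub_smul hg_row _,
    fun k _ _ _ => hzero k, fun k _ _ => hzero k⟩

/-- lexicographic order, X₁ > X₂; exceptional case d = 2, s⁽¹⁾₁ = 1 = l₁,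
s⁽²⁾₂ = t: existence of b ∈ L such that h_b = f⁽¹⁾ − (b/v₁)·g generates u^l and
kills all later points of B(2t+1). -/
theorem exceptional_case_lex
    (q : ℕ) (hq : IsPrimePow q)
    (F : Type) [Field F] [Fintype F] (hF : Fintype.card F = q)
    (L : Type) [Field L] [Algebra F L]
    (r₁ r₂ : ℕ) (hr₁ : 0 < r₁) (hr₂ : 0 < r₂) (hco : Nat.Coprime q (r₁ * r₂))
    (α₁ α₂ : L) (hα₁ : IsPrimitiveRoot α₁ r₁) (hα₂ : IsPrimitiveRoot α₂ r₂)
    (t : ℕ) (ht2 : 2 ≤ t) (ht4 : t ≤ 4) (htr1 : t ≤ r₁ / 2) (htr2 : t ≤ r₂ / 2)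
    (e : Fin r₁ × Fin r₂ → F) (hω : wt e ≤ t) (τ : Fin r₁ × Fin r₂)
    (U : ℕ × ℕ → L) (hU : U = synTable α₁ α₂ τ e)
    (l : ℕ × ℕ) (hl : l ∈ frontF r₁ r₂ t) (hl1 : l.1 = 1) (hl2 : l.2 ≠ 0)
    (f₁ f₂ : (ℕ × ℕ) →₀ L) (s₁ s₂ : ℕ × ℕ)
    (hLP1 : IsLP lexMonOrd f₁ s₁) (hLP2 : IsLP lexMonOrd f₂ s₂)
    (hstair1 : s₂.1 = 0) (hstair2 : s₁.2 = 0)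
    (hstair3 : s₂.1 < s₁.1) (hstair4 : s₁.2 < s₂.2)
    (hs1 : s₁.1 = 1) (hs2 : s₂.2 = t)
    (hgen1 : ∀ k : ℕ × ℕ, s₁.1 ≤ k.1 → s₁.2 ≤ k.2 → lexMonOrd.lt k l → fApp U f₁ s₁ k = 0)
    (hgen2 : ∀ k : ℕ × ℕ, s₂.1 ≤ k.1 → s₂.2 ≤ k.2 → lexMonOrd.lt k l → fApp U f₂ s₂ k = 0)
    (hmin : ∀ (g : (ℕ × ℕ) →₀ L) (sg : ℕ × ℕ), IsLP lexMonOrd g sg →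
      sg.1 ≤ s₁.1 - 1 → sg.2 ≤ s₂.2 - 1 →
      ∃ k : ℕ × ℕ, sg.1 ≤ k.1 ∧ sg.2 ≤ k.2 ∧ lexMonOrd.lt k l ∧ fApp U g sg k ≠ 0)
    (g : (ℕ × ℕ) →₀ L) (sg k₁ : ℕ × ℕ) (hgLP : IsLP lexMonOrd g sg)
    (hk₁l : lexMonOrd.lt k₁ l)
    (hgpast : ∀ m : ℕ × ℕ, sg.1 ≤ m.1 → sg.2 ≤ m.2 → lexMonOrd.lt m k₁ → fApp U g sg m = 0)
    (hk₁LP : (k₁.1 - sg.1, k₁.2 - sg.2) = (s₁.1 - 1, s₂.2 - 1))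
    (v₁ : L) (hv₁ : fApp U g sg k₁ = v₁) (hv₁0 : v₁ ≠ 0) :
    ∃ b : L, ∃ sh : ℕ × ℕ,
      IsLP lexMonOrd (f₁ - (b / v₁) • g) sh ∧
      (∀ k : ℕ × ℕ, sh.1 ≤ k.1 → sh.2 ≤ k.2 → lexMonOrd.lt k l →
        fApp U (f₁ - (b / v₁) • g) sh k = 0) ∧
      (∀ k ∈ hypB r₁ r₂ (2 * t + 1), lexMonOrd.le l k →
        fApp U (f₁ - (b / v₁) • g) sh k = 0) :=
  exceptional_case_lex_general F L r₁ r₂ α₁ α₂ hα₁ hα₂ t e hω τ U hU l hl hl1 f₁ s₁ s₂ hLP1 hstair2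
    hs1 hs2 hgen1 hmin g sg k₁ hgLP hk₁l hgpast hk₁LP v₁ hv₁ hv₁0
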